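/- Under the hyperplane reset setup, for every x ∈ ℝⁿ one has r_e(R̄(x)) = g_e(x), and consequently for every x, w ∈ ℝⁿ the total derivative of R̄ satisfies r̂ᵀ (DR̄(x) · w) = ĝᵀ w. -/

import Mathlib

/-!
Projecting `x` onto `G̃` and resetting through `R` lands on `R̃`, so `r̂ᵀ R(p x) = d`; the
correction term `g_e(x) r̂` then contributes exactly `g_e(x)` because `r̂` is a unit vector.
Hence `z ↦ r̂ᵀ R̄(z)` is the affine map `z ↦ ĝᵀ z + (d - c)`, and comparing its derivative with
the chain rule for `r̂ᵀ ∘ R̄` gives the derivative identity.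
-/

open Set
open scoped RealInnerProductSpace

section ResetExtension

variable {E F : Type*} [NormedAddCommGroup E] [InnerProductSpace ℝ E]
  [NormedAddCommGroup F] [InnerProductSpace ℝ F]

theorem inner_fderiv_apply_eq_of_inner_eq_add_const {f : E → F} {g : E} {r : F} {k : ℝ} {x : E}
    (hf : DifferentiableAt ℝ f x) (h : ∀ z, ⟪r, f z⟫ = ⟪g, z⟫ + k) (w : E) :
    ⟪r, fderiv ℝ f x w⟫ = ⟪g, w⟫ := by
  have hchain : HasFDerivAt (fun z => ⟪r, f z⟫) ((innerSL ℝ r).comp (fderiv ℝ f x)) x :=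
    (innerSL ℝ r).hasFDerivAt.comp x hf.hasFDerivAt
  have haffine : HasFDerivAt (fun z => ⟪r, f z⟫) (innerSL ℝ g) x := by
    rw [funext h]
    exact (innerSL ℝ g).hasFDerivAt.add_const k
  simpa using DFunLike.congr_fun (hchain.unique haffine) w

/-- The paper's `R̄`; for `‖g‖ = 1`, `x - (⟪g, x⟫ - c) • g` is the projection onto
`{x | ⟪g, x⟫ = c}`. -/
noncomputable def resetExtension (g : E) (r : F) (c : ℝ) (R : E → F) (x : E) : F :=
  R (x - (⟪g, x⟫ - c) • g) + (⟪g, x⟫ - c) • r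

theorem inner_sub_smul_unit_sub_const {g : E} (hg : ‖g‖ = 1) (c : ℝ) (x : E) :
    ⟪g, x - (⟪g, x⟫ - c) • g⟫ - c = 0 := by
  rw [inner_sub_right, real_inner_smul_right, real_inner_self_eq_norm_sq, hg]
  ring

theorem inner_resetExtension_sub {g : E} {r : F} (hg : ‖g‖ = 1) (hr : ‖r‖ = 1) {c d : ℝ}
    {R : E → F} (hR : MapsTo R {x | ⟪g, x⟫ - c = 0} {y | ⟪r, y⟫ - d = 0}) (x : E) :
    ⟪r, resetExtension g r c R x⟫ - d = ⟪g, x⟫ - c := by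
  have hreset : ⟪r, R (x - (⟪g, x⟫ - c) • g)⟫ - d = 0 :=
    hR (inner_sub_smul_unit_sub_const hg c x)
  rw [resetExtension, inner_add_right, real_inner_smul_right, real_inner_self_eq_norm_sq, hr]
  linarith

theorem Differentiable.resetExtension {R : E → F} (hR : Differentiable ℝ R) (g : E) (r : F)
    (c : ℝ) : Differentiable ℝ (resetExtension g r c R) := by
  have hlevel : Differentiable ℝ fun x => ⟪g, x⟫ - c :=
    (innerSL ℝ g).differentiable.sub_const c
  exact (hR.comp (differentiable_id.sub (hlevel.smul_const g))).add (hlevel.smul_const r)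

end ResetExtension

theorem reset_extension_level_general {n : ℕ}
    (ghat rhat : EuclideanSpace ℝ (Fin n)) (hg : ‖ghat‖ = 1) (hr : ‖rhat‖ = 1) (c d : ℝ)
    (R : EuclideanSpace ℝ (Fin n) → EuclideanSpace ℝ (Fin n))
    (hR : ContDiff ℝ (⊤:ℕ∞) R)
    (hguard : R '' {x | ⟪ghat, x⟫ - c = 0} = {y | ⟪rhat, y⟫ - d = 0}) :
    (∀ x : EuclideanSpace ℝ (Fin n),
      ⟪rhat, R (x - (⟪ghat, x⟫ - c) • ghat) + (⟪ghat, x⟫ - c) • rhat⟫ - d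
        = ⟪ghat, x⟫ - c) ∧
    (∀ x w : EuclideanSpace ℝ (Fin n),
      ⟪rhat, fderiv ℝ (fun z : EuclideanSpace ℝ (Fin n) =>
          R (z - (⟪ghat, z⟫ - c) • ghat) + (⟪ghat, z⟫ - c) • rhat) x w⟫
        = ⟪ghat, w⟫) := by
  have hmaps : MapsTo R {x | ⟪ghat, x⟫ - c = 0} {y | ⟪rhat, y⟫ - d = 0} :=
    hguard ▸ mapsTo_image R _
  have hlevel := inner_resetExtension_sub hg hr hmaps
  have hdiff := (hR.differentiable (by simp)).resetExtension ghat rhat c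
  exact ⟨hlevel, fun x w => inner_fderiv_apply_eq_of_inner_eq_add_const (k := d - c)
    (hdiff x) (fun z => by linarith [hlevel z]) w⟩

/-- Under the hyperplane reset setup, `r_e(R̄(x)) = g_e(x)` for every `x`, and
consequently `r̂ᵀ (DR̄(x) · w) = ĝᵀ w` for every `x, w`. -/
theorem reset_extension_level {n : ℕ}
    (ghat rhat : EuclideanSpace ℝ (Fin n)) (hg : ‖ghat‖ = 1) (hr : ‖rhat‖ = 1) (c d : ℝ)
    (R Rinv : EuclideanSpace ℝ (Fin n) → EuclideanSpace ℝ (Fin n))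
    (hR : ContDiff ℝ (⊤:ℕ∞) R) (hRinv : ContDiff ℝ (⊤:ℕ∞) Rinv)
    (hleft : Function.LeftInverse Rinv R) (hright : Function.RightInverse Rinv R)
    (hguard : R '' {x | ⟪ghat, x⟫ - c = 0} = {y | ⟪rhat, y⟫ - d = 0}) :
    (∀ x : EuclideanSpace ℝ (Fin n),
      ⟪rhat, R (x - (⟪ghat, x⟫ - c) • ghat) + (⟪ghat, x⟫ - c) • rhat⟫ - d
        = ⟪ghat, x⟫ - c) ∧
    (∀ x w : EuclideanSpace ℝ (Fin n),
      ⟪rhat, fderiv ℝ (fun z : EuclideanSpace ℝ (Fin n) =>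
          R (z - (⟪ghat, z⟫ - c) • ghat) + (⟪ghat, z⟫ - c) • rhat) x w⟫
        = ⟪ghat, w⟫) :=
  reset_extension_level_general ghat rhat hg hr c d R hR hguard
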